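/- arXiv:2412.08997 — 2 statements merged into one kernel-verified Lean document; each statement's English description precedes it below -/
import Mathlib

section
/- Let n = 6m for a positive integer m, and let i be an integer with 1 ≤ i ≤ m/2. Then the subsets S = {0, m+i, 2m, 2m+i, 4m} and T = {0, 2m, 2m+i, 3m+i, 4m} of Z_n are homometric 5-element subsets. (This is the Type C family.) -/
/-- The cyclic (Lee) distance on `ZMod n`: `d(a,b) = min(|a-b|, n-|a-b|)`. -/
def cycDist (n : ℕ) (a b : ZMod n) : ℕ := min (a - b).val (b - a).val

/-- The multiset of pairwise cyclic distances of a finite subset of `ZMod n`,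
taken over unordered pairs of distinct elements. -/
def distMultiset (n : ℕ) (S : Finset (ZMod n)) : Multiset ℕ :=
  (S.sym2.filter (fun p => ¬ p.IsDiag)).val.map
    (Sym2.lift ⟨fun a b => cycDist n a b, fun a b => by
      simp only [cycDist]; exact min_comm _ _⟩)

/-- Two subsets of `ZMod n` are homometric if they have the same multiset of
pairwise cyclic distances. -/
def Homometric (n : ℕ) (S T : Finset (ZMod n)) : Prop :=
  distMultiset n S = distMultiset n T

lemma natCast_ne_aux (n a b : ℕ) (ha : a < n) (hb : b < n) (hne : a ≠ b) :
    (a : ZMod n) ≠ (b : ZMod n) := by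
  haveI : NeZero n := ⟨by omega⟩
  intro h
  apply hne
  have := congrArg ZMod.val h
  rwa [ZMod.val_cast_of_lt ha, ZMod.val_cast_of_lt hb] at this

lemma cyc_eval (n a b : ℕ) (h1 : a < b) (h2 : b < n) :
    cycDist n (a : ZMod n) (b : ZMod n) = min (b - a) (n - (b - a)) := by
  haveI : NeZero n := ⟨by omega⟩
  have hba : ((b : ZMod n) - a) = ((b - a : ℕ) : ZMod n) := by
    rw [Nat.cast_sub h1.le]
  have hval : ((b : ZMod n) - a).val = b - a := by
    rw [hba, ZMod.val_cast_of_lt (by omega)]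
  have hab : ((a : ZMod n) - b) = -((b : ZMod n) - a) := by ring
  have hne : ((b : ZMod n) - a) ≠ 0 := by
    rw [hba]
    intro h
    have := congrArg ZMod.val h
    rw [ZMod.val_cast_of_lt (by omega), ZMod.val_zero] at this
    omega
  have hvneg : ((a : ZMod n) - b).val = n - (b - a) := by
    rw [hab, ZMod.neg_val, if_neg hne, hval]
  unfold cycDist
  rw [hvneg, hval, min_comm]

lemma distMultiset_five (n : ℕ) (a b c d e : ZMod n)
    (hab : a ≠ b) (hac : a ≠ c) (had : a ≠ d) (hae : a ≠ e)
    (hbc : b ≠ c) (hbd : b ≠ d) (hbe : b ≠ e)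
    (hcd : c ≠ d) (hce : c ≠ e) (hde : d ≠ e) :
    distMultiset n {a, b, c, d, e} =
      {cycDist n d e, cycDist n c d, cycDist n c e,
       cycDist n b c, cycDist n b d, cycDist n b e,
       cycDist n a b, cycDist n a c, cycDist n a d, cycDist n a e} := by
  have hval : ({a,b,c,d,e} : Finset (ZMod n)).val = (a ::ₘ b ::ₘ c ::ₘ d ::ₘ {e}) := by
    simp [Finset.insert_val, Multiset.ndinsert_of_notMem, hab, hac, had, hae, hbc, hbd, hbe, hcd, hce, hde]
  unfold distMultiset
  rw [Finset.filter_val, Finset.sym2_val, hval]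
  simp [Multiset.sym2_cons, Multiset.filter_cons, hab, hac, had, hae, hbc, hbd, hbe, hcd, hce, hde,
    show ({e} : Multiset (ZMod n)).sym2 = {s(e,e)} from rfl, Multiset.filter_singleton]

lemma card_five (n : ℕ) (a b c d e : ZMod n)
    (hab : a ≠ b) (hac : a ≠ c) (had : a ≠ d) (hae : a ≠ e)
    (hbc : b ≠ c) (hbd : b ≠ d) (hbe : b ≠ e)
    (hcd : c ≠ d) (hce : c ≠ e) (hde : d ≠ e) :
    ({a, b, c, d, e} : Finset (ZMod n)).card = 5 := by
  simp [Finset.card_insert_of_notMem, hab, hac, had, hae, hbc, hbd, hbe, hcd, hce, hde]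

theorem typeC_homometric (m i : ℕ) (hi1 : 1 ≤ i) (hi2 : 2 * i ≤ m) :
    ({0, (m : ZMod (6 * m)) + i, ((2 * m : ℕ) : ZMod (6 * m)),
        ((2 * m : ℕ) : ZMod (6 * m)) + i, ((4 * m : ℕ) : ZMod (6 * m))} :
          Finset (ZMod (6 * m))).card = 5 ∧
    ({0, ((2 * m : ℕ) : ZMod (6 * m)), ((2 * m : ℕ) : ZMod (6 * m)) + i,
        ((3 * m : ℕ) : ZMod (6 * m)) + i, ((4 * m : ℕ) : ZMod (6 * m))} :
          Finset (ZMod (6 * m))).card = 5 ∧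
    Homometric (6 * m)
      ({0, (m : ZMod (6 * m)) + i, ((2 * m : ℕ) : ZMod (6 * m)),
        ((2 * m : ℕ) : ZMod (6 * m)) + i, ((4 * m : ℕ) : ZMod (6 * m))} :
          Finset (ZMod (6 * m)))
      ({0, ((2 * m : ℕ) : ZMod (6 * m)), ((2 * m : ℕ) : ZMod (6 * m)) + i,
        ((3 * m : ℕ) : ZMod (6 * m)) + i, ((4 * m : ℕ) : ZMod (6 * m))} :
          Finset (ZMod (6 * m))) := by
  have hm : 2 ≤ m := by omega
  have e0 : (0 : ZMod (6 * m)) = ((0 : ℕ) : ZMod (6 * m)) := by norm_num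
  have e1 : (m : ZMod (6 * m)) + i = ((m + i : ℕ) : ZMod (6 * m)) := by push_cast; ring
  have e2 : ((2 * m : ℕ) : ZMod (6 * m)) + i = ((2 * m + i : ℕ) : ZMod (6 * m)) := by
    push_cast; ring
  have e3 : ((3 * m : ℕ) : ZMod (6 * m)) + i = ((3 * m + i : ℕ) : ZMod (6 * m)) := by
    push_cast; ring
  rw [e0, e1, e2, e3]
  have ne : ∀ a b : ℕ, a < 6 * m → b < 6 * m → a ≠ b →
      ((a : ℕ) : ZMod (6 * m)) ≠ ((b : ℕ) : ZMod (6 * m)) := fun a b ha hb h =>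
    natCast_ne_aux (6 * m) a b ha hb h
  refine ⟨card_five _ _ _ _ _ _ (ne _ _ (by omega) (by omega) (by omega))
      (ne _ _ (by omega) (by omega) (by omega)) (ne _ _ (by omega) (by omega) (by omega))
      (ne _ _ (by omega) (by omega) (by omega)) (ne _ _ (by omega) (by omega) (by omega))
      (ne _ _ (by omega) (by omega) (by omega)) (ne _ _ (by omega) (by omega) (by omega))
      (ne _ _ (by omega) (by omega) (by omega)) (ne _ _ (by omega) (by omega) (by omega))
      (ne _ _ (by omega) (by omega) (by omega)),
    card_five _ _ _ _ _ _ (ne _ _ (by omega) (by omega) (by omega))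
      (ne _ _ (by omega) (by omega) (by omega)) (ne _ _ (by omega) (by omega) (by omega))
      (ne _ _ (by omega) (by omega) (by omega)) (ne _ _ (by omega) (by omega) (by omega))
      (ne _ _ (by omega) (by omega) (by omega)) (ne _ _ (by omega) (by omega) (by omega))
      (ne _ _ (by omega) (by omega) (by omega)) (ne _ _ (by omega) (by omega) (by omega))
      (ne _ _ (by omega) (by omega) (by omega)), ?_⟩
  unfold Homometric
  rw [distMultiset_five _ _ _ _ _ _ (ne _ _ (by omega) (by omega) (by omega))
      (ne _ _ (by omega) (by omega) (by omega)) (ne _ _ (by omega) (by omega) (by omega))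
      (ne _ _ (by omega) (by omega) (by omega)) (ne _ _ (by omega) (by omega) (by omega))
      (ne _ _ (by omega) (by omega) (by omega)) (ne _ _ (by omega) (by omega) (by omega))
      (ne _ _ (by omega) (by omega) (by omega)) (ne _ _ (by omega) (by omega) (by omega))
      (ne _ _ (by omega) (by omega) (by omega)),
    distMultiset_five _ _ _ _ _ _ (ne _ _ (by omega) (by omega) (by omega))
      (ne _ _ (by omega) (by omega) (by omega)) (ne _ _ (by omega) (by omega) (by omega))
      (ne _ _ (by omega) (by omega) (by omega)) (ne _ _ (by omega) (by omega) (by omega))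
      (ne _ _ (by omega) (by omega) (by omega)) (ne _ _ (by omega) (by omega) (by omega))
      (ne _ _ (by omega) (by omega) (by omega)) (ne _ _ (by omega) (by omega) (by omega))
      (ne _ _ (by omega) (by omega) (by omega))]
  have ev : ∀ a b v : ℕ, a < b → b < 6 * m → min (b - a) (6 * m - (b - a)) = v →
      cycDist (6 * m) ((a : ℕ) : ZMod (6 * m)) ((b : ℕ) : ZMod (6 * m)) = v := by
    intro a b v h1 h2 h3
    rw [cyc_eval _ _ _ h1 h2, h3]
  rw [ev (2*m+i) (4*m) (2*m-i) (by omega) (by omega) (by omega),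
      ev (2*m) (2*m+i) i (by omega) (by omega) (by omega),
      ev (2*m) (4*m) (2*m) (by omega) (by omega) (by omega),
      ev (m+i) (2*m) (m-i) (by omega) (by omega) (by omega),
      ev (m+i) (2*m+i) m (by omega) (by omega) (by omega),
      ev (m+i) (4*m) (3*m-i) (by omega) (by omega) (by omega),
      ev 0 (m+i) (m+i) (by omega) (by omega) (by omega),
      ev 0 (2*m) (2*m) (by omega) (by omega) (by omega),
      ev 0 (2*m+i) (2*m+i) (by omega) (by omega) (by omega),
      ev 0 (4*m) (2*m) (by omega) (by omega) (by omega),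
      ev (3*m+i) (4*m) (m-i) (by omega) (by omega) (by omega),
      ev (2*m+i) (3*m+i) m (by omega) (by omega) (by omega),
      ev (2*m) (3*m+i) (m+i) (by omega) (by omega) (by omega),
      ev 0 (3*m+i) (3*m-i) (by omega) (by omega) (by omega)]
  simp only [Multiset.insert_eq_cons, ← Multiset.singleton_add]
  ac_rfl
end

section
/- Let n = 8m for a positive integer m, and let i be an integer with 1 ≤ i < 4m and i not in {m, 2m, 3m}. Then the subsets S = {0, i, m, 2m+i, 4m} and T = {0, i, m+i, 2m, 4m+i} of Z_n are homometric 5-element subsets. (This is the Type F family.) -/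
lemma cycDist_congr {n : ℕ} {a b a' b' : ZMod n} (h : a - b = a' - b') :
    cycDist n a b = cycDist n a' b' := by
  have h2 : b - a = b' - a' := by rw [← neg_sub, h, neg_sub]
  simp [cycDist, h, h2]

lemma cycDist_comm {n : ℕ} (a b : ZMod n) : cycDist n a b = cycDist n b a :=
  min_comm _ _

lemma five_val {n : ℕ} (a b c d e : ZMod n) (hab : a ≠ b) (hac : a ≠ c) (had : a ≠ d)
    (hae : a ≠ e) (hbc : b ≠ c) (hbd : b ≠ d) (hbe : b ≠ e) (hcd : c ≠ d)
    (hce : c ≠ e) (hde : d ≠ e) :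
    ({a,b,c,d,e} : Finset (ZMod n)).val = ↑[a,b,c,d,e] := by
  simp [Finset.insert_val, Multiset.ndinsert_of_notMem, hab, hac, had, hae, hbc, hbd, hbe,
    hcd, hce, hde]
  rfl

lemma five_card {n : ℕ} (a b c d e : ZMod n) (hab : a ≠ b) (hac : a ≠ c) (had : a ≠ d)
    (hae : a ≠ e) (hbc : b ≠ c) (hbd : b ≠ d) (hbe : b ≠ e) (hcd : c ≠ d)
    (hce : c ≠ e) (hde : d ≠ e) :
    ({a,b,c,d,e} : Finset (ZMod n)).card = 5 := by
  rw [Finset.card, five_val a b c d e hab hac had hae hbc hbd hbe hcd hce hde]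
  rfl

lemma five_dist {n : ℕ} (a b c d e : ZMod n) (hab : a ≠ b) (hac : a ≠ c) (had : a ≠ d)
    (hae : a ≠ e) (hbc : b ≠ c) (hbd : b ≠ d) (hbe : b ≠ e) (hcd : c ≠ d)
    (hce : c ≠ e) (hde : d ≠ e) :
    distMultiset n {a,b,c,d,e} = {cycDist n a b, cycDist n a c, cycDist n a d,
      cycDist n a e, cycDist n b c, cycDist n b d, cycDist n b e, cycDist n c d,
      cycDist n c e, cycDist n d e} := by
  unfold distMultiset
  rw [Finset.filter_val, Finset.sym2_val,
    five_val a b c d e hab hac had hae hbc hbd hbe hcd hce hde]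
  simp [Multiset.sym2_coe, List.sym2, Multiset.filter_coe, hab, hac, had, hae, hbc, hbd,
    hbe, hcd, hce, hde, cycDist]
  rfl

theorem typeF_homometric (m i : ℕ) (hi1 : 1 ≤ i) (hi2 : i < 4 * m)
    (h1 : i ≠ m) (h2 : i ≠ 2 * m) (h3 : i ≠ 3 * m) :
    ({0, (i : ZMod (8 * m)), (m : ZMod (8 * m)),
        ((2 * m : ℕ) : ZMod (8 * m)) + i, ((4 * m : ℕ) : ZMod (8 * m))} :
          Finset (ZMod (8 * m))).card = 5 ∧
    ({0, (i : ZMod (8 * m)), (m : ZMod (8 * m)) + i,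
        ((2 * m : ℕ) : ZMod (8 * m)), ((4 * m : ℕ) : ZMod (8 * m)) + i} :
          Finset (ZMod (8 * m))).card = 5 ∧
    Homometric (8 * m)
      ({0, (i : ZMod (8 * m)), (m : ZMod (8 * m)),
        ((2 * m : ℕ) : ZMod (8 * m)) + i, ((4 * m : ℕ) : ZMod (8 * m))} :
          Finset (ZMod (8 * m)))
      ({0, (i : ZMod (8 * m)), (m : ZMod (8 * m)) + i,
        ((2 * m : ℕ) : ZMod (8 * m)), ((4 * m : ℕ) : ZMod (8 * m)) + i} :
          Finset (ZMod (8 * m))) := by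
  have hm : 1 ≤ m := by omega
  set N := 8 * m with hN
  have hinj : ∀ x y : ℕ, x < N → y < N → x ≠ y → (x : ZMod N) ≠ (y : ZMod N) := by
    intro x y hx hy hxy hcast
    apply hxy
    have := congrArg ZMod.val hcast
    rwa [ZMod.val_cast_of_lt hx, ZMod.val_cast_of_lt hy] at this
  -- rewrite all elements as natCasts
  have E0 : (0 : ZMod N) = ((0 : ℕ) : ZMod N) := by simp
  have E1 : ((2 * m : ℕ) : ZMod N) + (i : ZMod N) = ((2 * m + i : ℕ) : ZMod N) := by
    push_cast; ring
  have E2 : ((m : ℕ) : ZMod N) + (i : ZMod N) = ((m + i : ℕ) : ZMod N) := by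
    push_cast; ring
  have E3 : ((4 * m : ℕ) : ZMod N) + (i : ZMod N) = ((4 * m + i : ℕ) : ZMod N) := by
    push_cast; ring
  rw [E0, E1, E2, E3]
  -- distinctness facts
  have d1 := hinj 0 i (by omega) (by omega) (by omega)
  have d2 := hinj 0 m (by omega) (by omega) (by omega)
  have d3 := hinj 0 (2*m+i) (by omega) (by omega) (by omega)
  have d4 := hinj 0 (4*m) (by omega) (by omega) (by omega)
  have d5 := hinj i m (by omega) (by omega) (by omega)
  have d6 := hinj i (2*m+i) (by omega) (by omega) (by omega)
  have d7 := hinj i (4*m) (by omega) (by omega) (by omega)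
  have d8 := hinj m (2*m+i) (by omega) (by omega) (by omega)
  have d9 := hinj m (4*m) (by omega) (by omega) (by omega)
  have d10 := hinj (2*m+i) (4*m) (by omega) (by omega) (by omega)
  have e2 := hinj 0 (m+i) (by omega) (by omega) (by omega)
  have e3 := hinj 0 (2*m) (by omega) (by omega) (by omega)
  have e4 := hinj 0 (4*m+i) (by omega) (by omega) (by omega)
  have e5 := hinj i (m+i) (by omega) (by omega) (by omega)
  have e6 := hinj i (2*m) (by omega) (by omega) (by omega)
  have e7 := hinj i (4*m+i) (by omega) (by omega) (by omega)
  have e8 := hinj (m+i) (2*m) (by omega) (by omega) (by omega)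
  have e9 := hinj (m+i) (4*m+i) (by omega) (by omega) (by omega)
  have e10 := hinj (2*m) (4*m+i) (by omega) (by omega) (by omega)
  refine ⟨five_card _ _ _ _ _ d1 d2 d3 d4 d5 d6 d7 d8 d9 d10,
    five_card _ _ _ _ _ d1 e2 e3 e4 e5 e6 e7 e8 e9 e10, ?_⟩
  unfold Homometric
  rw [five_dist _ _ _ _ _ d1 d2 d3 d4 d5 d6 d7 d8 d9 d10,
    five_dist _ _ _ _ _ d1 e2 e3 e4 e5 e6 e7 e8 e9 e10]
  have h8 : ((8 * m : ℕ) : ZMod N) = 0 := by rw [hN]; exact ZMod.natCast_self _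
  -- match distances: rewrite T side distances as S side ones
  have t2 : cycDist N ((0:ℕ):ZMod N) ((m+i : ℕ):ZMod N)
      = cycDist N ((m:ℕ):ZMod N) ((2*m+i : ℕ):ZMod N) := by
    apply cycDist_congr; push_cast; ring
  have t3 : cycDist N ((0:ℕ):ZMod N) ((2*m : ℕ):ZMod N)
      = cycDist N ((i:ℕ):ZMod N) ((2*m+i : ℕ):ZMod N) := by
    apply cycDist_congr; push_cast; ring
  have t4 : cycDist N ((0:ℕ):ZMod N) ((4*m+i : ℕ):ZMod N)
      = cycDist N ((i:ℕ):ZMod N) ((4*m : ℕ):ZMod N) := by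
    rw [cycDist_comm]; apply cycDist_congr
    have h8' : (m : ZMod N) * 8 = 0 := by push_cast at h8; linear_combination h8
    push_cast
    linear_combination h8'
  have t5 : cycDist N ((i:ℕ):ZMod N) ((m+i : ℕ):ZMod N)
      = cycDist N ((0:ℕ):ZMod N) ((m : ℕ):ZMod N) := by
    apply cycDist_congr; push_cast; ring
  have t6 : cycDist N ((i:ℕ):ZMod N) ((2*m : ℕ):ZMod N)
      = cycDist N ((2*m+i:ℕ):ZMod N) ((4*m : ℕ):ZMod N) := by
    apply cycDist_congr; push_cast; ring
  have t7 : cycDist N ((i:ℕ):ZMod N) ((4*m+i : ℕ):ZMod N)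
      = cycDist N ((0:ℕ):ZMod N) ((4*m : ℕ):ZMod N) := by
    apply cycDist_congr; push_cast; ring
  have t8 : cycDist N ((m+i:ℕ):ZMod N) ((2*m : ℕ):ZMod N)
      = cycDist N ((i:ℕ):ZMod N) ((m : ℕ):ZMod N) := by
    apply cycDist_congr; push_cast; ring
  have t9 : cycDist N ((m+i:ℕ):ZMod N) ((4*m+i : ℕ):ZMod N)
      = cycDist N ((m:ℕ):ZMod N) ((4*m : ℕ):ZMod N) := by
    apply cycDist_congr; push_cast; ring
  have t10 : cycDist N ((2*m:ℕ):ZMod N) ((4*m+i : ℕ):ZMod N)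
      = cycDist N ((0:ℕ):ZMod N) ((2*m+i : ℕ):ZMod N) := by
    apply cycDist_congr; push_cast; ring
  rw [t2, t3, t4, t5, t6, t7, t8, t9, t10]
  simp only [Multiset.insert_eq_cons, ← Multiset.singleton_add]
  ac_rfl
end
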